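/- arXiv:1909.03173 — 2 statements merged into one kernel-verified Lean document; each statement's English description precedes it below -/
import Mathlib

section
/- Let g : ℝ → ℝ be differentiable with |g'(y)| < 4/π² for all y in the interval I_k = [2kπ - π/2, 2kπ + π/2], and let ξ ∈ [2kπ - π/2, 2kπ]. Then for every x ∈ [2kπ, 2kπ + π/2], the integral ∫_ξ^x [cos(y) - g'(y)] dy is nonnegative. -/
open MeasureTheory Real Set Metric Filter

/-! On `[ξ, x]` the integral equals `(sin x - sin ξ) - (g x - g ξ)`. Writing
`sin x - sin ξ = 2 sin ((x - ξ)/2) cos ((x + ξ)/2)`, the midpoint lies within `π/4` of `2kπ`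
and Jordan's inequality bounds the sine, so `sin x - sin ξ ≥ (√2/π) (x - ξ)`; the mean value
theorem gives `g x - g ξ ≤ (4/π²) (x - ξ)`, and `4/π² < √2/π` because `√2 π > 4`. -/

namespace Real

lemma sqrt_two_div_two_le_cos_of_abs_sub_le (k : ℤ) {y : ℝ}
    (hy : |y - k * (2 * π)| ≤ π / 4) : √2 / 2 ≤ cos y := by
  rw [← cos_sub_int_mul_two_pi y k, ← cos_abs, ← cos_pi_div_four]
  exact cos_le_cos_of_nonneg_of_le_pi (abs_nonneg _) (by linarith [pi_pos]) hy

lemma sqrt_two_div_pi_mul_le_sin_sub_sin {a b : ℝ} (hab : a ≤ b) (hba : b - a ≤ π)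
    (hcos : √2 / 2 ≤ cos ((b + a) / 2)) : √2 / π * (b - a) ≤ sin b - sin a := by
  have hjordan : 2 / π * ((b - a) / 2) ≤ sin ((b - a) / 2) :=
    mul_le_sin (by linarith) (by linarith)
  have hsin_nonneg : 0 ≤ sin ((b - a) / 2) :=
    sin_nonneg_of_nonneg_of_le_pi (by linarith) (by linarith [pi_pos])
  calc √2 / π * (b - a) = 2 * (2 / π * ((b - a) / 2)) * (√2 / 2) := by
        field_simp
    _ ≤ 2 * sin ((b - a) / 2) * cos ((b + a) / 2) := by gcongr
    _ = sin b - sin a := by rw [sin_sub_sin]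

lemma four_div_pi_sq_lt_sqrt_two_div_pi : 4 / π ^ 2 < √2 / π := by
  have hsqrt : 1.4 < √2 := by
    rw [lt_sqrt (by norm_num)]
    norm_num
  rw [div_lt_div_iff₀ (by positivity) pi_pos]
  nlinarith [pi_gt_three]

end Real

lemma integral_cos_sub_deriv {g : ℝ → ℝ} (hg : ContDiff ℝ 1 g) (a b : ℝ) :
    ∫ y in a..b, (cos y - deriv g y) = (sin b - sin a) - (g b - g a) := by
  have hg' : Continuous (deriv g) := hg.continuous_deriv le_rfl
  have hdiff : Differentiable ℝ g := hg.differentiable one_ne_zero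
  rw [intervalIntegral.integral_sub (continuous_cos.intervalIntegrable _ _)
      (hg'.intervalIntegrable _ _), integral_cos,
    intervalIntegral.integral_deriv_eq_sub (fun y _ => hdiff y) (hg'.intervalIntegrable _ _)]

theorem integral_cos_sub_deriv_nonneg_general (k : ℕ) (g : ℝ → ℝ)
    (hg : ContDiff ℝ 1 g)
    (hg' : ∀ y ∈ Set.Icc (2 * k * π - π / 2) (2 * k * π + π / 2),
      |deriv g y| < 4 / π ^ 2)
    (ξ : ℝ) (hξ : ξ ∈ Set.Icc (2 * k * π - π / 2) (2 * k * π))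
    (x : ℝ) (hx : x ∈ Set.Icc (2 * k * π) (2 * k * π + π / 2)) :
    0 ≤ ∫ y in ξ..x, (Real.cos y - deriv g y) := by
  obtain ⟨hξ₁, hξ₂⟩ := hξ
  obtain ⟨hx₁, hx₂⟩ := hx
  have hξx : ξ ≤ x := hξ₂.trans hx₁
  have hcos : √2 / 2 ≤ cos ((x + ξ) / 2) :=
    sqrt_two_div_two_le_cos_of_abs_sub_le k (by rw [abs_le]; push_cast; constructor <;> linarith)
  have hsin := sqrt_two_div_pi_mul_le_sin_sub_sin hξx (by linarith) hcos
  have hg_mvt : g x - g ξ ≤ 4 / π ^ 2 * (x - ξ) :=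
    (convex_Icc ξ x).image_sub_le_mul_sub_of_deriv_le
      hg.continuous.continuousOn (hg.differentiable one_ne_zero).differentiableOn
      (fun y hy => (le_abs_self _).trans
        (hg' y (Icc_subset_Icc hξ₁ hx₂ (interior_subset hy))).le)
      ξ (left_mem_Icc.2 hξx) x (right_mem_Icc.2 hξx) hξx
  have hslope :=
    mul_le_mul_of_nonneg_right four_div_pi_sq_lt_sqrt_two_div_pi.le (sub_nonneg.2 hξx)
  rw [integral_cos_sub_deriv hg]
  linarith

/-- If `|g'| < 4/π²` on `I_k = [2kπ - π/2, 2kπ + π/2]`, `ξ ∈ [2kπ - π/2, 2kπ]` and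
`x ∈ [2kπ, 2kπ + π/2]`, then `∫_ξ^x (cos y - g' y) dy ≥ 0`. -/
theorem integral_cos_sub_deriv_nonneg (k : ℕ) (hk : 0 < k) (g : ℝ → ℝ)
    (hg : ContDiff ℝ 1 g)
    (hg' : ∀ y ∈ Set.Icc (2 * k * π - π / 2) (2 * k * π + π / 2),
      |deriv g y| < 4 / π ^ 2)
    (ξ : ℝ) (hξ : ξ ∈ Set.Icc (2 * k * π - π / 2) (2 * k * π))
    (x : ℝ) (hx : x ∈ Set.Icc (2 * k * π) (2 * k * π + π / 2)) :
    0 ≤ ∫ y in ξ..x, (Real.cos y - deriv g y) :=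
  integral_cos_sub_deriv_nonneg_general k g hg hg' ξ hξ x hx
end

section
/- Let K satisfy the size estimate |K(x,y,z)| ≤ C₀(|x-y|+|x-z|)^{-2n} and let b ∈ C¹(ℝⁿ) with ‖∇b‖_∞ < ∞. Then for every η > 0, every locally integrable f, g, and every x ∈ ℝⁿ, the truncation error satisfies ∫_{|x-y|+|x-z| ≤ η} |b(x)-b(y)| |K(x,y,z)| |f(y)g(z)| dy dz ≤ C η ‖∇b‖_∞ ℳ(f,g)(x), where ℳ(f,g)(x) := sup_{Q∋x} (⨍_Q |f|)(⨍_Q |g|) is the bilinear Hardy–Littlewood maximal operator and C depends only on n. -/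
/-!
On the dyadic annulus `r < ‖x - y‖ + ‖x - z‖ ≤ 2r` the size condition bounds `|K x y z|` by
`C₀ r^{-2n}` and the gradient bound gives `|b x - b y| ≤ 2 Mb r`, while the annulus lies in
`B × B` for the cube `B = B(x, 2r)` of volume `(4r)^n`. Hence its contribution is at most
`2 · 4^{2n} C₀ Mb r` times `(⨍_B |f|)(⨍_B |g|) ≤ ℳ(f,g)(x)`. Summing over `r = η/2^{j+1}`
gives the factor `η`; the remaining set `y = x` contributes nothing since `b x - b y` vanishes.
-/

open MeasureTheory Real Set Metric Filter

/-- The bilinear Hardy–Littlewood maximal operator: supremum over all cubes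
(sup-norm closed balls) containing `x` of the product of the averages of `|f|`
and `|g|`, valued in `ENNReal`. -/
noncomputable def bilinearMaximal {n : ℕ} (f g : (Fin n → ℝ) → ℝ) (x : Fin n → ℝ) :
    ENNReal :=
  ⨆ (c : Fin n → ℝ) (r : ℝ) (_ : 0 < r) (_ : x ∈ Metric.closedBall c r),
    laverage (volume.restrict (Metric.closedBall c r)) (fun y => ENNReal.ofReal |f y|) *
      laverage (volume.restrict (Metric.closedBall c r)) (fun z => ENNReal.ofReal |g z|)

open ENNReal

section ProdBound

variable {α β : Type*} [MeasurableSpace α] [MeasurableSpace β]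

/- Unlike `MeasureTheory.lintegral_prod_mul`, these bounds need no measurability of `F` and `G`:
`f` and `g` in the theorem are arbitrary functions. -/

theorem lintegral_prod_mul_le_of_lintegral_ne_top (μ : Measure α) (ν : Measure β)
    {F : α → ℝ≥0∞} {G : β → ℝ≥0∞} (hF : ∀ y, F y ≠ ∞) (hG : ∫⁻ z, G z ∂ν ≠ ∞) :
    ∫⁻ q, F q.1 * G q.2 ∂μ.prod ν ≤ (∫⁻ y, F y ∂μ) * ∫⁻ z, G z ∂ν :=
  calc ∫⁻ q, F q.1 * G q.2 ∂μ.prod ν ≤ ∫⁻ y, ∫⁻ z, F y * G z ∂ν ∂μ := lintegral_prod_le _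
    _ = ∫⁻ y, F y * ∫⁻ z, G z ∂ν ∂μ :=
        lintegral_congr fun y => lintegral_const_mul' _ _ (hF y)
    _ = (∫⁻ y, F y ∂μ) * ∫⁻ z, G z ∂ν := lintegral_mul_const' _ _ hG

theorem lintegral_prod_mul_le (μ : Measure α) (ν : Measure β) [SFinite μ] [SFinite ν]
    {F : α → ℝ≥0∞} {G : β → ℝ≥0∞} (hF : ∀ y, F y ≠ ∞) (hG : ∀ z, G z ≠ ∞) :
    ∫⁻ q, F q.1 * G q.2 ∂μ.prod ν ≤ (∫⁻ y, F y ∂μ) * ∫⁻ z, G z ∂ν := by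
  by_cases hGtop : ∫⁻ z, G z ∂ν = ∞
  · by_cases hFtop : ∫⁻ y, F y ∂μ = ∞
    · simp [hFtop, hGtop]
    calc ∫⁻ q, F q.1 * G q.2 ∂μ.prod ν = ∫⁻ q, G q.1 * F q.2 ∂ν.prod μ := by
          rw [← lintegral_prod_swap]
          simp only [Prod.fst_swap, Prod.snd_swap, mul_comm]
      _ ≤ (∫⁻ z, G z ∂ν) * ∫⁻ y, F y ∂μ :=
          lintegral_prod_mul_le_of_lintegral_ne_top ν μ hG hFtop
      _ = (∫⁻ y, F y ∂μ) * ∫⁻ z, G z ∂ν := mul_comm _ _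
  · exact lintegral_prod_mul_le_of_lintegral_ne_top μ ν hF hGtop

end ProdBound

section PairAnnulus

variable {E : Type*} [NormedAddCommGroup E]

def pairAnnulus (x : E) (r : ℝ) : Set (E × E) :=
  {q | r < ‖x - q.1‖ + ‖x - q.2‖ ∧ ‖x - q.1‖ + ‖x - q.2‖ ≤ 2 * r}

theorem measurableSet_pairAnnulus [MeasurableSpace E] [BorelSpace E] [SecondCountableTopology E]
    (x : E) (r : ℝ) : MeasurableSet (pairAnnulus x r) := by
  have hcont : Continuous fun q : E × E => ‖x - q.1‖ + ‖x - q.2‖ := by fun_prop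
  exact measurableSet_Ioc.preimage hcont.measurable

theorem pairAnnulus_subset_closedBall_prod (x : E) (r : ℝ) :
    pairAnnulus x r ⊆ closedBall x (2 * r) ×ˢ closedBall x (2 * r) := by
  rintro q ⟨-, hq⟩
  simp only [mem_prod, mem_closedBall, dist_comm _ x, dist_eq_norm]
  constructor <;> linarith [norm_nonneg (x - q.1), norm_nonneg (x - q.2)]

theorem setOf_le_subset_union_pairAnnulus (x : E) (η : ℝ) :
    {q : E × E | ‖x - q.1‖ + ‖x - q.2‖ ≤ η} ⊆
      {q | q.1 = x} ∪ ⋃ j : ℕ, pairAnnulus x (η / 2 / 2 ^ j) := by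
  intro q (hq : ‖x - q.1‖ + ‖x - q.2‖ ≤ η)
  set s := ‖x - q.1‖ + ‖x - q.2‖
  rcases (add_nonneg (norm_nonneg (x - q.1)) (norm_nonneg (x - q.2))).eq_or_lt with hs | hs
  · left
    have : ‖x - q.1‖ = 0 := by linarith [norm_nonneg (x - q.1), norm_nonneg (x - q.2)]
    exact (sub_eq_zero.mp (norm_eq_zero.mp this)).symm
  · right
    obtain ⟨j, hj_le, hj_lt⟩ :=
      exists_nat_pow_near ((one_le_div hs).mpr hq) (one_lt_two (α := ℝ))
    refine mem_iUnion.mpr ⟨j, ?_, ?_⟩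
    · rw [div_div, ← pow_succ', div_lt_iff₀ (by positivity), mul_comm]
      exact (div_lt_iff₀ hs).mp hj_lt
    · rw [show 2 * (η / 2 / 2 ^ j) = η / 2 ^ j by ring, le_div_iff₀ (by positivity), mul_comm]
      exact (le_div_iff₀ hs).mp hj_le

theorem abs_le_of_mem_pairAnnulus {K : E → E → ℝ} {C₀ : ℝ} {x : E} {d : ℕ}
    (hK : ∀ y z, (x ≠ y ∨ x ≠ z) → |K y z| ≤ C₀ / (‖x - y‖ + ‖x - z‖) ^ d)
    {r : ℝ} (hr : 0 < r) {q : E × E} (hq : q ∈ pairAnnulus x r) :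
    |K q.1 q.2| ≤ C₀ / r ^ d := by
  obtain ⟨hlow, -⟩ := hq
  have hs : 0 < ‖x - q.1‖ + ‖x - q.2‖ := hr.trans hlow
  have hne : x ≠ q.1 ∨ x ≠ q.2 := by
    by_contra! h
    simp [← h.1, ← h.2] at hs
  have hKq := hK q.1 q.2 hne
  have hC₀ : 0 ≤ C₀ := by
    have := (abs_nonneg _).trans hKq
    rw [div_nonneg_iff, or_iff_left (fun h => (pow_pos hs d).not_ge h.2)] at this
    exact this.1
  exact hKq.trans (div_le_div_of_nonneg_left hC₀ (pow_pos hr d) (pow_le_pow_left₀ hr.le hlow.le d))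

end PairAnnulus

section Cubes

variable {n : ℕ}

theorem setLIntegral_closedBall_prod_le_bilinearMaximal (f g : (Fin n → ℝ) → ℝ)
    {x c : Fin n → ℝ} {ρ : ℝ} (hρ : 0 < ρ) (hx : x ∈ closedBall c ρ) :
    ∫⁻ q in closedBall c ρ ×ˢ closedBall c ρ, ENNReal.ofReal |f q.1| * ENNReal.ofReal |g q.2|
      ≤ volume (closedBall c ρ) ^ 2 * bilinearMaximal f g x := by
  set B := closedBall c ρ
  have hB : volume B ≠ ∞ := measure_closedBall_lt_top.ne
  have havg : (⨍⁻ y in B, ENNReal.ofReal |f y| ∂volume) * ⨍⁻ z in B, ENNReal.ofReal |g z| ∂volume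
      ≤ bilinearMaximal f g x :=
    le_iSup_of_le c <| le_iSup_of_le ρ <| le_iSup_of_le hρ <| le_iSup_of_le hx le_rfl
  calc ∫⁻ q in B ×ˢ B, ENNReal.ofReal |f q.1| * ENNReal.ofReal |g q.2|
      ≤ (∫⁻ y in B, ENNReal.ofReal |f y|) * ∫⁻ z in B, ENNReal.ofReal |g z| := by
        rw [Measure.volume_eq_prod, ← Measure.prod_restrict]
        exact lintegral_prod_mul_le _ _ (fun _ => ofReal_ne_top) (fun _ => ofReal_ne_top)
    _ = volume B ^ 2 * ((⨍⁻ y in B, ENNReal.ofReal |f y| ∂volume) *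
          ⨍⁻ z in B, ENNReal.ofReal |g z| ∂volume) := by
        rw [← measure_mul_setLAverage _ hB, ← measure_mul_setLAverage _ hB]
        ring
    _ ≤ volume B ^ 2 * bilinearMaximal f g x := by gcongr

theorem setLIntegral_pairAnnulus_le {K : (Fin n → ℝ) → (Fin n → ℝ) → ℝ} {C₀ : ℝ}
    {b : (Fin n → ℝ) → ℝ} {Mb : ℝ} {x : Fin n → ℝ}
    (hK : ∀ y z, (x ≠ y ∨ x ≠ z) → |K y z| ≤ C₀ / (‖x - y‖ + ‖x - z‖) ^ (2 * n))
    (hb : ∀ y, |b x - b y| ≤ Mb * ‖x - y‖) (hMb : 0 ≤ Mb)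
    (f g : (Fin n → ℝ) → ℝ) {r : ℝ} (hr : 0 < r) :
    ∫⁻ q in pairAnnulus x r,
        ENNReal.ofReal (|b x - b q.1| * |K q.1 q.2| * (|f q.1| * |g q.2|))
      ≤ ENNReal.ofReal (2 * 4 ^ (2 * n) * C₀ * Mb) * ENNReal.ofReal r *
          bilinearMaximal f g x := by
  set c := Mb * (2 * r) * (C₀ / r ^ (2 * n))
  set B := closedBall x (2 * r)
  have hpt : ∀ q ∈ pairAnnulus x r,
      ENNReal.ofReal (|b x - b q.1| * |K q.1 q.2| * (|f q.1| * |g q.2|))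
        ≤ ENNReal.ofReal c * (ENNReal.ofReal |f q.1| * ENNReal.ofReal |g q.2|) := by
    intro q hq
    have hbq : |b x - b q.1| ≤ Mb * (2 * r) :=
      (hb q.1).trans (mul_le_mul_of_nonneg_left
        ((mem_closedBall_iff_norm'.mp (pairAnnulus_subset_closedBall_prod x r hq).1)) hMb)
    rw [← ofReal_mul (abs_nonneg _), ← ofReal_mul' (by positivity)]
    gcongr
    exact mul_le_mul hbq (abs_le_of_mem_pairAnnulus hK hr hq) (abs_nonneg _) (by positivity)
  calc ∫⁻ q in pairAnnulus x r,
        ENNReal.ofReal (|b x - b q.1| * |K q.1 q.2| * (|f q.1| * |g q.2|))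
      ≤ ∫⁻ q in pairAnnulus x r,
          ENNReal.ofReal c * (ENNReal.ofReal |f q.1| * ENNReal.ofReal |g q.2|) :=
        setLIntegral_mono' (measurableSet_pairAnnulus x r) hpt
    _ ≤ ∫⁻ q in B ×ˢ B, ENNReal.ofReal c * (ENNReal.ofReal |f q.1| * ENNReal.ofReal |g q.2|) :=
        lintegral_mono_set (pairAnnulus_subset_closedBall_prod x r)
    _ = ENNReal.ofReal c *
          ∫⁻ q in B ×ˢ B, ENNReal.ofReal |f q.1| * ENNReal.ofReal |g q.2| :=
        lintegral_const_mul' _ _ ofReal_ne_top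
    _ ≤ ENNReal.ofReal c * (volume B ^ 2 * bilinearMaximal f g x) := by
        gcongr
        exact setLIntegral_closedBall_prod_le_bilinearMaximal f g (by positivity)
          (mem_closedBall_self (by positivity))
    _ = ENNReal.ofReal (2 * 4 ^ (2 * n) * C₀ * Mb) * ENNReal.ofReal r *
          bilinearMaximal f g x := by
        rw [Real.volume_pi_closedBall _ (by positivity), Fintype.card_fin,
          ← ofReal_pow (by positivity), ← mul_assoc, ← ofReal_mul' (by positivity), ← ofReal_mul' hr.le]
        congr 2
        simp only [c, show 2 * (2 * r) = 4 * r by ring, ← pow_mul, mul_pow]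
        field_simp
        ring

end Cubes

/-- Truncation-error estimate: if `|K(x,y,z)| ≤ C₀(|x-y|+|x-z|)^{-2n}` and
`b ∈ C¹` with `‖∇b‖_∞ ≤ Mb`, then for every `η > 0`
`∫_{|x-y|+|x-z| ≤ η} |b(x)-b(y)||K(x,y,z)||f(y)g(z)| dy dz
  ≤ C C₀ η Mb ℳ(f,g)(x)` with `C` depending only on `n`. -/
theorem truncation_error_le_maximal (n : ℕ) :
    ∃ C : ℝ, 0 < C ∧
      ∀ (K : (Fin n → ℝ) → (Fin n → ℝ) → (Fin n → ℝ) → ℝ) (C₀ : ℝ),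
        (∀ x y z : Fin n → ℝ, (x ≠ y ∨ x ≠ z) →
          |K x y z| ≤ C₀ / (‖x - y‖ + ‖x - z‖) ^ (2 * n)) →
      ∀ (b : (Fin n → ℝ) → ℝ) (Mb : ℝ), ContDiff ℝ 1 b →
        (∀ w, ‖fderiv ℝ b w‖ ≤ Mb) →
      ∀ η : ℝ, 0 < η → ∀ (f g : (Fin n → ℝ) → ℝ) (x : Fin n → ℝ),
        ∫⁻ q in {q : (Fin n → ℝ) × (Fin n → ℝ) | ‖x - q.1‖ + ‖x - q.2‖ ≤ η},
            ENNReal.ofReal (|b x - b q.1| * |K x q.1 q.2| * (|f q.1| * |g q.2|))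
          ≤ ENNReal.ofReal (C * C₀ * η * Mb) * bilinearMaximal f g x := by
  refine ⟨2 * 4 ^ (2 * n), by positivity, ?_⟩
  intro K C₀ hK b Mb hb hMb η hη f g x
  have hbL : ∀ y, |b x - b y| ≤ Mb * ‖x - y‖ := fun y =>
    Convex.norm_image_sub_le_of_norm_fderiv_le
      (fun w _ => (hb.differentiable one_ne_zero).differentiableAt) (fun w _ => hMb w)
      convex_univ (mem_univ y) (mem_univ x)
  set h := fun q : (Fin n → ℝ) × (Fin n → ℝ) =>
    ENNReal.ofReal (|b x - b q.1| * |K x q.1 q.2| * (|f q.1| * |g q.2|))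
  set a := 2 * 4 ^ (2 * n) * C₀ * Mb
  have hdiag : ∫⁻ q in {q | q.1 = x}, h q = 0 :=
    setLIntegral_eq_zero ((measurableSet_singleton x).preimage measurable_fst)
      fun q (hq : q.1 = x) => by simp [h, hq]
  calc ∫⁻ q in {q | ‖x - q.1‖ + ‖x - q.2‖ ≤ η}, h q
      ≤ ∫⁻ q in {q | q.1 = x} ∪ ⋃ j : ℕ, pairAnnulus x (η / 2 / 2 ^ j), h q :=
        lintegral_mono_set (setOf_le_subset_union_pairAnnulus x η)
    _ ≤ ∫⁻ q in ⋃ j : ℕ, pairAnnulus x (η / 2 / 2 ^ j), h q := by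
        refine (lintegral_union_le h _ _).trans_eq ?_
        rw [hdiag, zero_add]
    _ ≤ ∑' j : ℕ, ∫⁻ q in pairAnnulus x (η / 2 / 2 ^ j), h q := lintegral_iUnion_le _ _
    _ ≤ ∑' j : ℕ, ENNReal.ofReal a * ENNReal.ofReal (η / 2 / 2 ^ j) * bilinearMaximal f g x :=
        ENNReal.tsum_le_tsum fun j => setLIntegral_pairAnnulus_le (hK x) hbL
          ((norm_nonneg _).trans (hMb x)) f g (by positivity)
    _ = ENNReal.ofReal (a * η) * bilinearMaximal f g x := by
        rw [ENNReal.tsum_mul_right, ENNReal.tsum_mul_left,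
          ← ENNReal.ofReal_tsum_of_nonneg (fun j => by positivity) (summable_geometric_two' η),
          tsum_geometric_two', ofReal_mul' hη.le]
    _ = ENNReal.ofReal (2 * 4 ^ (2 * n) * C₀ * η * Mb) * bilinearMaximal f g x := by
        congr 2
        ring
end
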